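/- For every n-vertex graph G, avm(G) ≤ (n/2) * (1 - M(G)^{-2/n}); in particular avm(G) ≤ log M(G), and moreover the matching energy satisfies ME(G) ≥ 4·avm(G). -/

import Mathlib

open Finset Polynomial

namespace AvgMatching

variable {V : Type*} [Fintype V] [DecidableEq V]

/-- A matching of `G`, viewed as a finite set of edges of `G`
no two of which share a vertex. -/
def IsMatchingSet (G : SimpleGraph V) (A : Finset (Sym2 V)) : Prop :=
  ↑A ⊆ G.edgeSet ∧ (A : Set (Sym2 V)).Pairwise fun e f => ∀ v : V, v ∈ e → v ∉ f

open Classical in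
/-- The finite set of all matchings of `G` (including the empty matching). -/
noncomputable def matchings (G : SimpleGraph V) : Finset (Finset (Sym2 V)) :=
  Finset.univ.filter (IsMatchingSet G)

/-- `M(G)`: the number of matchings of `G` (including the empty one). -/
noncomputable def numM (G : SimpleGraph V) : ℕ := (matchings G).card

/-- `S(G)`: the sum of the sizes of all matchings of `G`. -/
noncomputable def totS (G : SimpleGraph V) : ℕ := ∑ A ∈ matchings G, A.card

/-- `avm(G) = S(G)/M(G)`: the average size of a matching of `G`. -/
noncomputable def avm (G : SimpleGraph V) : ℚ := (totS G : ℚ) / (numM G)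

/-- `m(G,k)`: the number of matchings of size `k` in `G`. -/
noncomputable def mCount (G : SimpleGraph V) (k : ℕ) : ℕ :=
  ((matchings G).filter fun A => A.card = k).card

/-- `μ(G)`: the matching number of `G`. -/
noncomputable def matchNum (G : SimpleGraph V) : ℕ := (matchings G).sup Finset.card

/-- Delete a vertex `u` (keeping it as an isolated vertex, which does not
affect matchings): all edges incident to `u` are removed. -/
def delVert (G : SimpleGraph V) (u : V) : SimpleGraph V :=
  G.deleteEdges {e : Sym2 V | u ∈ e}

/-- The matching polynomial `Φ(G,x) = ∑ₖ (-1)^k m(G,k) x^(n-2k)` of `G`. -/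
noncomputable def matchPoly (G : SimpleGraph V) : Polynomial ℝ :=
  ∑ k ∈ Finset.range (Fintype.card V + 1),
    Polynomial.C ((-1 : ℝ) ^ k * (mCount G k : ℝ)) * Polynomial.X ^ (Fintype.card V - 2 * k)

/-! ### Auxiliary combinatorial lemmas -/

set_option linter.unusedSectionVars false

lemma empty_mem_matchings (G : SimpleGraph V) : ∅ ∈ matchings G := by
  simp [matchings, IsMatchingSet]

lemma one_le_numM (G : SimpleGraph V) : 1 ≤ numM G :=
  Finset.card_pos.mpr ⟨∅, empty_mem_matchings G⟩

lemma card_filter_mem_eq_two (G : SimpleGraph V) {e : Sym2 V} (he : e ∈ G.edgeSet) :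
    (Finset.univ.filter (fun v => v ∈ e)).card = 2 := by
  induction e with
  | _ a b =>
    have hab : a ≠ b := ((SimpleGraph.mem_edgeSet G).mp he).ne
    have h : Finset.univ.filter (fun v => v ∈ s(a,b)) = {a, b} := by
      ext v; simp [Sym2.mem_iff]
    rw [h, Finset.card_insert_of_notMem (by simp [hab]), Finset.card_singleton]

lemma two_mul_card_le (G : SimpleGraph V) {A : Finset (Sym2 V)} (hA : IsMatchingSet G A) :
    2 * A.card ≤ Fintype.card V := by
  have hdisj : (A : Set (Sym2 V)).PairwiseDisjoint
      (fun e => Finset.univ.filter (fun v => v ∈ e)) := by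
    intro e he f hf hef
    simp only [Function.onFun]
    rw [Finset.disjoint_left]
    intro v hv hv'
    simp only [Finset.mem_filter] at hv hv'
    exact hA.2 he hf hef v hv.2 hv'.2
  calc 2 * A.card = ∑ e ∈ A, (Finset.univ.filter (fun v => v ∈ e)).card := by
        rw [Finset.sum_congr rfl (fun e he => card_filter_mem_eq_two G (hA.1 he)),
          Finset.sum_const, smul_eq_mul, mul_comm]
    _ = (A.biUnion (fun e => Finset.univ.filter (fun v => v ∈ e))).card :=
        (Finset.card_biUnion (fun e he f hf hef => hdisj he hf hef)).symm
    _ ≤ Fintype.card V := Finset.card_le_univ _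

lemma mCount_eq_zero (G : SimpleGraph V) {k : ℕ} (hk : Fintype.card V < 2 * k) :
    mCount G k = 0 := by
  rw [mCount]
  rw [Finset.card_eq_zero, Finset.filter_eq_empty_iff]
  intro A hA hcard
  have := two_mul_card_le G (by simpa [matchings] using hA)
  omega

lemma numM_eq_sum (G : SimpleGraph V) :
    numM G = ∑ k ∈ Finset.range (Fintype.card V + 1), mCount G k := by
  rw [numM]
  simp only [mCount]
  exact Finset.card_eq_sum_card_fiberwise (fun A hA => by
    have := two_mul_card_le G (by simpa [matchings] using hA)
    simp only [Finset.mem_coe, Finset.mem_range]; omega)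

lemma totS_eq_sum (G : SimpleGraph V) :
    totS G = ∑ k ∈ Finset.range (Fintype.card V + 1), k * mCount G k := by
  rw [totS, ← Finset.sum_fiberwise_of_maps_to (g := Finset.card)
    (t := Finset.range (Fintype.card V + 1)) (fun A hA => by
      have := two_mul_card_le G (by simpa [matchings] using hA)
      simp only [Finset.mem_range]; omega)]
  refine Finset.sum_congr rfl fun k _ => ?_
  rw [mCount]
  rw [Finset.sum_congr rfl (fun A hA => (Finset.mem_filter.mp hA).2),
    Finset.sum_const, smul_eq_mul, mul_comm]

/-! ### Evaluation of the matching polynomial at `I` -/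

lemma evalI_aux (n : ℕ) (m : ℕ → ℕ) (hm : ∀ k, n < 2 * k → m k = 0) :
    (((∑ k ∈ Finset.range (n + 1),
      Polynomial.C ((-1 : ℝ) ^ k * (m k : ℝ)) * Polynomial.X ^ (n - 2 * k)).map
        (algebraMap ℝ ℂ)).eval Complex.I)
      = (∑ k ∈ Finset.range (n+1), (m k : ℂ)) * Complex.I ^ n := by
  simp only [Polynomial.map_sum, Polynomial.map_mul, Polynomial.map_C, Polynomial.map_pow,
    Polynomial.map_X, Polynomial.eval_finset_sum, eval_mul, eval_C, eval_pow, eval_X]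
  rw [Finset.sum_mul]
  refine Finset.sum_congr rfl fun k _ => ?_
  have hc : (algebraMap ℝ ℂ) ((-1:ℝ) ^ k * (m k : ℝ)) = (-1:ℂ) ^ k * (m k : ℂ) := by
    push_cast; simp
  rw [hc]
  by_cases h : 2 * k ≤ n
  · have h2 : Complex.I ^ n = Complex.I ^ (n - 2 * k) * (-1 : ℂ) ^ k := by
      rw [← Complex.I_sq, ← pow_mul, ← pow_add]
      congr 1; omega
    rw [h2]; ring
  · rw [hm k (by omega)]; simp

lemma evalI_deriv_aux (n : ℕ) (m : ℕ → ℕ) (hm : ∀ k, n < 2 * k → m k = 0) :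
    (((Polynomial.derivative (∑ k ∈ Finset.range (n + 1),
      Polynomial.C ((-1 : ℝ) ^ k * (m k : ℝ)) * Polynomial.X ^ (n - 2 * k))).map
        (algebraMap ℝ ℂ)).eval Complex.I)
      = ((n : ℂ) * (∑ k ∈ Finset.range (n+1), (m k : ℂ))
          - 2 * ∑ k ∈ Finset.range (n+1), (k : ℂ) * (m k : ℂ)) * Complex.I ^ (n - 1) := by
  simp only [Polynomial.derivative_sum, Polynomial.derivative_C_mul, Polynomial.derivative_X_pow,
    Polynomial.map_sum, Polynomial.map_mul, Polynomial.map_C, Polynomial.map_pow,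
    Polynomial.map_X, Polynomial.eval_finset_sum, eval_mul, eval_C, eval_pow, eval_X]
  have key : ∀ k ∈ Finset.range (n+1),
      (algebraMap ℝ ℂ) ((-1:ℝ) ^ k * (m k : ℝ)) *
        ((algebraMap ℝ ℂ) ((n - 2*k : ℕ) : ℝ) * Complex.I ^ (n - 2*k - 1))
        = ((n : ℂ) - 2 * k) * (m k : ℂ) * Complex.I ^ (n - 1) := by
    intro k _
    have hc : (algebraMap ℝ ℂ) ((-1:ℝ) ^ k * (m k : ℝ)) = (-1:ℂ) ^ k * (m k : ℂ) := by
      push_cast; simp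
    have hc2 : (algebraMap ℝ ℂ) (((n - 2*k : ℕ)) : ℝ) = ((n - 2*k : ℕ) : ℂ) := by
      push_cast; simp
    rw [hc, hc2]
    rcases lt_trichotomy (2*k) n with h | h | h
    · have h2 : Complex.I ^ (n - 1) = Complex.I ^ (n - 2 * k - 1) * (-1 : ℂ) ^ k := by
        rw [← Complex.I_sq, ← pow_mul, ← pow_add]
        congr 1; omega
      have h3 : ((n - 2*k : ℕ) : ℂ) = (n : ℂ) - 2 * k := by
        push_cast [Nat.cast_sub (by omega : 2*k ≤ n)]; ring
      rw [h2, h3]; ring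
    · have h0 : n - 2*k = 0 := by omega
      have h3 : (n : ℂ) - 2*k = 0 := by
        have : (n:ℂ) = 2*k := by rw [← h]; push_cast; ring
        rw [this]; ring
      rw [h0, h3]; simp
    · rw [hm k (by omega)]; simp
  rw [Finset.sum_congr rfl key, ← Finset.sum_mul]
  congr 1
  rw [Finset.mul_sum, Finset.mul_sum, ← Finset.sum_sub_distrib]
  exact Finset.sum_congr rfl fun k _ => by ring

lemma derivative_finset_prod {ι : Type*} [DecidableEq ι] (s : Finset ι)
    (f : ι → Polynomial ℝ) :
    Polynomial.derivative (∏ i ∈ s, f i)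
      = ∑ i ∈ s, (∏ j ∈ s.erase i, f j) * Polynomial.derivative (f i) := by
  induction s using Finset.induction_on with
  | empty => simp
  | @insert a s ha ih =>
    rw [Finset.prod_insert ha, Polynomial.derivative_mul, Finset.sum_insert ha,
      Finset.erase_insert ha, ih, Finset.mul_sum]
    have hcongr : ∀ i ∈ s,
        f a * ((∏ j ∈ s.erase i, f j) * Polynomial.derivative (f i))
          = (∏ j ∈ (insert a s).erase i, f j) * Polynomial.derivative (f i) := by
      intro i hi
      have hne : a ≠ i := fun h => ha (h ▸ hi)
      rw [Finset.erase_insert_of_ne hne,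
        Finset.prod_insert (fun h => ha (Finset.mem_of_mem_erase h))]
      ring
    rw [Finset.sum_congr rfl hcongr]
    ring

/-! ### The core identities -/

lemma normSq_identity (n : ℕ) (M : ℕ) (μ : Fin n → ℝ)
    (E1 : (M:ℂ) * Complex.I ^ n = ∏ j, (Complex.I - (μ j : ℂ))) :
    (M:ℝ)^2 = ∏ j, (1 + μ j ^ 2) := by
  have h1 := congrArg Complex.normSq E1
  rw [map_mul, map_pow, Complex.normSq_I, one_pow, mul_one, map_prod] at h1
  rw [show ∀ (x:ℕ), Complex.normSq (x:ℂ) = (x:ℝ)^2 from fun x => by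
    rw [Complex.normSq_apply]; simp [sq]] at h1
  rw [h1]
  exact Finset.prod_congr rfl fun j _ => by
    rw [Complex.normSq_apply]; simp; ring

lemma deriv_identity (n : ℕ) (hn : 1 ≤ n) (M S : ℕ) (μ : Fin n → ℝ)
    (E1 : (M:ℂ) * Complex.I ^ n = ∏ j, (Complex.I - (μ j : ℂ)))
    (E2 : ((n:ℂ) * M - 2 * S) * Complex.I ^ (n-1)
          = ∑ j, ∏ l ∈ Finset.univ.erase j, (Complex.I - (μ l : ℂ))) :
    (n : ℝ) * M - 2 * S = M * ∑ j, 1 / (1 + μ j ^ 2) := by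
  have hne : ∀ j : Fin n, Complex.I - (μ j : ℂ) ≠ 0 := by
    intro j h
    have := congrArg Complex.im h
    simp at this
  have hpe : ∀ j : Fin n, ∏ l ∈ Finset.univ.erase j, (Complex.I - (μ l : ℂ))
      = (M:ℂ) * Complex.I ^ n / (Complex.I - (μ j : ℂ)) := by
    intro j
    rw [eq_div_iff (hne j), E1, Finset.prod_erase_mul _ _ (Finset.mem_univ j)]
  rw [Finset.sum_congr rfl fun j _ => hpe j] at E2
  have hIn : Complex.I ^ n = Complex.I ^ (n-1) * Complex.I := by
    rw [← pow_succ]; congr 1; omega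
  have hInz : Complex.I ^ (n-1) ≠ 0 := pow_ne_zero _ Complex.I_ne_zero
  have E3 : (n:ℂ) * M - 2 * S = ∑ j, (M:ℂ) * (Complex.I / (Complex.I - (μ j : ℂ))) := by
    apply mul_right_cancel₀ hInz
    rw [E2, Finset.sum_mul]
    refine Finset.sum_congr rfl fun j _ => ?_
    rw [hIn]; ring
  have hre := congrArg Complex.re E3
  simp only [Complex.sub_re, Complex.mul_re, Complex.natCast_re, Complex.natCast_im,
    Complex.re_ofNat, Complex.im_ofNat, mul_zero, zero_mul, sub_zero, Complex.re_sum] at hre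
  rw [hre, Finset.mul_sum]
  refine Finset.sum_congr rfl fun j _ => ?_
  congr 1
  rw [Complex.div_re]
  have hnsq : Complex.normSq (Complex.I - (μ j : ℂ)) = 1 + μ j ^ 2 := by
    rw [Complex.normSq_apply]; simp; ring
  rw [hnsq]
  simp

/-! ### The analytic inequalities -/

lemma final_ineq (n : ℕ) (hn : 1 ≤ n) (M S : ℕ) (hM : 1 ≤ M) (μ : Fin n → ℝ)
    (K1 : (M:ℝ)^2 = ∏ j, (1 + μ j ^ 2))
    (K2 : (n : ℝ) * M - 2 * S = M * ∑ j, 1 / (1 + μ j ^ 2)) :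
    (S:ℝ)/M ≤ ((n : ℝ) / 2) * (1 - (M : ℝ) ^ (-(2 : ℝ) / (n : ℝ))) ∧
      (S:ℝ)/M ≤ Real.log M ∧
      4 * ((S:ℝ)/M) ≤ ∑ j, |μ j| := by
  have hM0 : (0:ℝ) < M := by exact_mod_cast Nat.lt_of_lt_of_le Nat.zero_lt_one hM
  have hn0 : (0:ℝ) < n := by exact_mod_cast hn
  have hpos : ∀ j : Fin n, (0:ℝ) < 1 + μ j ^ 2 := fun j => by positivity
  set a : ℝ := (S:ℝ)/M with ha
  have hsum : ∑ j, 1 / (1 + μ j ^ 2) = n - 2 * a := by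
    have h := K2
    rw [ha, show (n:ℝ) - 2 * (S / M) = ((n:ℝ) * M - 2 * S) / M by
      rw [sub_div, mul_div_assoc, mul_div_assoc, div_self hM0.ne', mul_one]]
    rw [eq_div_iff hM0.ne', h]; ring
  have hts : ∑ j, μ j ^ 2 / (1 + μ j ^ 2) = 2 * a := by
    have h1 : ∀ j : Fin n, μ j ^ 2 / (1 + μ j ^ 2) = 1 - 1 / (1 + μ j ^ 2) := by
      intro j; field_simp; ring
    rw [Finset.sum_congr rfl fun j _ => h1 j, Finset.sum_sub_distrib, hsum]
    simp only [Finset.sum_const, Finset.card_univ, Fintype.card_fin, nsmul_eq_mul, mul_one]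
    ring
  refine ⟨?_, ?_, ?_⟩
  · -- AM-GM
    have hz : ∀ j ∈ (Finset.univ : Finset (Fin n)), (0:ℝ) ≤ 1 / (1 + μ j ^ 2) :=
      fun j _ => by positivity
    have hw : ∀ j ∈ (Finset.univ : Finset (Fin n)), (0:ℝ) ≤ 1/(n:ℝ) := fun j _ => by positivity
    have hw1 : ∑ _j : Fin n, (1:ℝ)/(n:ℝ) = 1 := by
      rw [Finset.sum_const, Finset.card_univ, Fintype.card_fin, nsmul_eq_mul]
      field_simp
    have amgm := Real.geom_mean_le_arith_mean_weighted Finset.univ (fun _ => 1/(n:ℝ))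
      (fun j => 1 / (1 + μ j ^ 2)) hw hw1 hz
    have hprod : ∏ j, (1 / (1 + μ j ^ 2)) ^ ((1:ℝ)/(n:ℝ)) = (M:ℝ) ^ (-(2:ℝ)/(n:ℝ)) := by
      rw [Real.finset_prod_rpow _ _ hz]
      have : ∏ j, 1 / (1 + μ j ^ 2) = ((M:ℝ)^2)⁻¹ := by
        rw [K1]; rw [← Finset.prod_inv_distrib]
        exact Finset.prod_congr rfl fun j _ => one_div _
      rw [this]
      rw [show ((M:ℝ)^2)⁻¹ = (M:ℝ) ^ (-2:ℝ) by
        rw [Real.rpow_neg hM0.le, Real.rpow_two]]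
      rw [← Real.rpow_mul hM0.le]
      congr 1
      ring
    rw [hprod] at amgm
    have hrhs : ∑ i : Fin n, 1/(n:ℝ) * (1 / (1 + μ i ^ 2)) = ((n:ℝ) - 2*a)/n := by
      rw [← Finset.mul_sum, hsum]
      ring
    rw [hrhs] at amgm
    have : (M:ℝ) ^ (-(2:ℝ)/(n:ℝ)) ≤ ((n:ℝ) - 2*a)/n := by
      simpa using amgm
    rw [le_div_iff₀ hn0] at this
    nlinarith [this]
  · -- log bound
    have hlog : ∀ j : Fin n, μ j ^ 2 / (1 + μ j ^ 2) ≤ Real.log (1 + μ j ^ 2) := by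
      intro j
      have h := Real.log_le_sub_one_of_pos (show (0:ℝ) < 1/(1 + μ j ^ 2) by positivity)
      rw [one_div, Real.log_inv] at h
      have : 1/(1 + μ j ^ 2) - 1 = -(μ j ^ 2 / (1 + μ j ^ 2)) := by field_simp; ring
      rw [one_div] at this
      rw [this] at h
      linarith
    have h2 : ∑ j, μ j ^ 2 / (1 + μ j ^ 2) ≤ ∑ j, Real.log (1 + μ j ^ 2) :=
      Finset.sum_le_sum fun j _ => hlog j
    rw [← Real.log_prod (fun j _ => (hpos j).ne'), ← K1, Real.log_pow] at h2
    rw [hts] at h2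
    push_cast at h2
    linarith
  · -- energy bound
    rw [show (4:ℝ) * a = 2 * (2 * a) by ring, ← hts, Finset.mul_sum]
    refine Finset.sum_le_sum fun j _ => ?_
    have h1 : μ j ^ 2 = |μ j|^2 := (sq_abs _).symm
    have h2 : 0 ≤ |μ j| := abs_nonneg _
    rw [← mul_div_assoc, div_le_iff₀ (hpos j)]
    nlinarith [sq_nonneg (|μ j| - 1), hpos j]

theorem avm_le_and_matching_energy (n : ℕ) (hn : Fintype.card V = n) (G : SimpleGraph V)
    (μ : Fin n → ℝ)
    (hfact : matchPoly G = ∏ j : Fin n, (Polynomial.X - Polynomial.C (μ j))) :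
    (avm G : ℝ) ≤ ((n : ℝ) / 2) * (1 - (numM G : ℝ) ^ (-(2 : ℝ) / (n : ℝ))) ∧
      (avm G : ℝ) ≤ Real.log (numM G) ∧
      4 * (avm G : ℝ) ≤ ∑ j : Fin n, |μ j| := by
  subst hn
  have hM1 : 1 ≤ numM G := one_le_numM G
  have hMr : (1:ℝ) ≤ (numM G : ℝ) := by exact_mod_cast hM1
  rcases Nat.eq_zero_or_pos (Fintype.card V) with h0 | hn1
  · -- degenerate case n = 0
    have havm : avm G = 0 := by
      rw [avm, totS, Finset.sum_eq_zero (fun A hA => by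
        have := two_mul_card_le G (by simpa [matchings] using hA)
        omega)]
      simp
    rw [havm]
    push_cast
    refine ⟨by rw [h0]; norm_num, Real.log_nonneg hMr, ?_⟩
    simpa using Finset.sum_nonneg (fun j (_ : j ∈ (Finset.univ : Finset (Fin (Fintype.card V)))) =>
      abs_nonneg (μ j))
  · -- main case n ≥ 1
    have hm : ∀ k, Fintype.card V < 2 * k → mCount G k = 0 := fun k hk => mCount_eq_zero G hk
    have hmp : matchPoly G = ∑ k ∈ Finset.range (Fintype.card V + 1),
        Polynomial.C ((-1 : ℝ) ^ k * (mCount G k : ℝ))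
          * Polynomial.X ^ (Fintype.card V - 2 * k) := rfl
    -- E1
    have hL := evalI_aux (Fintype.card V) (mCount G) hm
    rw [← hmp] at hL
    have hR : (((matchPoly G).map (algebraMap ℝ ℂ)).eval Complex.I)
        = ∏ j, (Complex.I - (μ j : ℂ)) := by
      rw [hfact, Polynomial.map_prod, Polynomial.eval_prod]
      refine Finset.prod_congr rfl fun j _ => by simp
    have E1 : ((numM G : ℂ)) * Complex.I ^ (Fintype.card V)
        = ∏ j, (Complex.I - (μ j : ℂ)) := by
      rw [← hR, hL, numM_eq_sum]
      push_cast
      ring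
    -- E2
    have hDL := evalI_deriv_aux (Fintype.card V) (mCount G) hm
    rw [← hmp] at hDL
    have hDR : (((Polynomial.derivative (matchPoly G)).map (algebraMap ℝ ℂ)).eval Complex.I)
        = ∑ j, ∏ l ∈ Finset.univ.erase j, (Complex.I - (μ l : ℂ)) := by
      rw [hfact, derivative_finset_prod]
      simp only [Polynomial.derivative_sub, Polynomial.derivative_X, Polynomial.derivative_C,
        sub_zero, mul_one, Polynomial.map_sum, Polynomial.map_prod, Polynomial.map_sub,
        Polynomial.map_X, Polynomial.map_C, Polynomial.eval_finset_sum, Polynomial.eval_prod,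
        Polynomial.eval_sub, Polynomial.eval_X, Polynomial.eval_C, Complex.coe_algebraMap]
    have E2 : (((Fintype.card V : ℂ)) * (numM G) - 2 * (totS G))
          * Complex.I ^ (Fintype.card V - 1)
        = ∑ j, ∏ l ∈ Finset.univ.erase j, (Complex.I - (μ l : ℂ)) := by
      rw [← hDR, hDL, numM_eq_sum, totS_eq_sum]
      push_cast
      ring
    have K1 := normSq_identity (Fintype.card V) (numM G) μ E1
    have K2 := deriv_identity (Fintype.card V) hn1 (numM G) (totS G) μ E1 E2
    have hfin := final_ineq (Fintype.card V) hn1 (numM G) (totS G) hM1 μ K1 K2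
    have havm : ((avm G : ℚ) : ℝ) = (totS G : ℝ) / (numM G : ℝ) := by
      rw [avm]; push_cast; ring
    rw [havm]
    exact hfin

end AvgMatching
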